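/- For every density matrix ρ on ℂ^d, M_Re(ρ) ≤ (1/2)·M_{T,1/2}(ρ), and equality holds if and only if ρ = ρ*, i.e. if and only if ρ is real. -/

import Mathlib

/-!
Write `X = √ρ` and `R = √(X ρ* X)`, so that `F(ρ, ρ*) = tr R`. If `B Bᴴ ≤ M` then
`Re tr B ≤ tr √M`: expanding `0 ≤ tr (S - S⁻¹B)ᴴ(S - S⁻¹B)` with `S = (B Bᴴ + ε)^{1/4}` and letting
`ε → 0` gives `Re tr B ≤ tr √(B Bᴴ)`, and `√` is operator monotone. In case of equality
`√(B Bᴴ) ≤ √M` have the same trace, so they coincide and `B Bᴴ = M`.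

For `B = √ρ √ρ*` this gives `A(ρ, ρ*) ≤ F(ρ, ρ*)`. For `B = (ρ + R)/2` one has
`X Re(ρ) X - B Bᴴ = (ρ - R)ᴴ(ρ - R)/4`, so `2 F(ρ, Re ρ) ≥ 1 + tr R`; together these give the
inequality. In the equality case `ρ = R`, hence `A(ρ, ρ*) = tr R = 1`, and then
`tr (√ρ - √ρ*)ᴴ(√ρ - √ρ*) = 2 - 2 A(ρ, ρ*) = 0`.
-/

open Matrix Complex ComplexOrder Classical

/-- The positive semidefinite square root of a matrix (junk value `0` if not PSD). -/
noncomputable def psqrt {n : Type*} [Fintype n] [DecidableEq n] (A : Matrix n n ℂ) :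
    Matrix n n ℂ :=
  if h : A.PosSemidef then
    h.1.eigenvectorUnitary.1 * diagonal ((↑) ∘ Real.sqrt ∘ h.1.eigenvalues) *
      (star h.1.eigenvectorUnitary : Matrix n n ℂ)
  else 0

/-- Entrywise complex conjugate of a matrix. -/
def mconj {m n : Type*} (A : Matrix m n ℂ) : Matrix m n ℂ := A.map (starRingEnd ℂ)

/-- Fidelity `F(ρ,σ) = Tr √(√ρ σ √ρ)`. -/
noncomputable def fidelity {n : Type*} [Fintype n] [DecidableEq n] (ρ σ : Matrix n n ℂ) : ℝ :=
  ((psqrt (psqrt ρ * σ * psqrt ρ)).trace).re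

/-- The real part state `Re(ρ) = (ρ + ρ*)/2`. -/
noncomputable def reState {n : Type*} (ρ : Matrix n n ℂ) : Matrix n n ℂ :=
  ((1 : ℂ)/2) • (ρ + mconj ρ)

/-- The imaginarity measure `M_Re(ρ) = 1 - F(ρ, Re(ρ))`. -/
noncomputable def MRe {n : Type*} [Fintype n] [DecidableEq n] (ρ : Matrix n n ℂ) : ℝ :=
  1 - fidelity ρ (reState ρ)

/-- A density matrix: positive semidefinite with trace 1. -/
def IsDensityMatrix {n : Type*} [Fintype n] (ρ : Matrix n n ℂ) : Prop :=
  ρ.PosSemidef ∧ ρ.trace = 1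

/-- The quantum affinity `A(ρ,σ) = Tr(√ρ √σ)`. -/
noncomputable def affinity {n : Type*} [Fintype n] [DecidableEq n] (ρ σ : Matrix n n ℂ) : ℝ :=
  ((psqrt ρ * psqrt σ).trace).re

/-- The Tsallis relative entropy imaginarity of order 1/2: `M_{T,1/2}(ρ) = 1 - A(ρ, ρ*)`. -/
noncomputable def MT {n : Type*} [Fintype n] [DecidableEq n] (ρ : Matrix n n ℂ) : ℝ :=
  1 - affinity ρ (mconj ρ)


open scoped MatrixOrder

namespace Matrix

variable {n : Type*} [Fintype n]

lemma PosSemidef.re_trace_nonneg {A : Matrix n n ℂ} (hA : A.PosSemidef) : 0 ≤ A.trace.re :=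
  (Complex.nonneg_iff.mp hA.trace_nonneg).1

lemma PosSemidef.eq_zero_of_re_trace_nonpos {A : Matrix n n ℂ} (hA : A.PosSemidef)
    (h : A.trace.re ≤ 0) : A = 0 :=
  hA.trace_eq_zero_iff.mp <|
    Complex.ext (le_antisymm h hA.re_trace_nonneg) (Complex.nonneg_iff.mp hA.trace_nonneg).2.symm

lemma re_trace_mono {A B : Matrix n n ℂ} (h : A ≤ B) : A.trace.re ≤ B.trace.re := by
  simpa [trace_sub] using (le_iff.mp h).re_trace_nonneg

lemma eq_of_le_of_re_trace_le {A B : Matrix n n ℂ} (h : A ≤ B) (htr : B.trace.re ≤ A.trace.re) :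
    A = B := by
  refine (sub_eq_zero.mp ((le_iff.mp h).eq_zero_of_re_trace_nonpos ?_)).symm
  simpa [trace_sub] using htr

lemma half_smul_add_mul_self_eq {ρ R : Matrix n n ℂ} (hρ : ρᴴ = ρ) (hR : Rᴴ = R) :
    (1 / 2 : ℂ) • (ρ * ρ + R * R) =
      (1 / 2 : ℂ) • (ρ + R) * ((1 / 2 : ℂ) • (ρ + R))ᴴ + (1 / 4 : ℂ) • ((ρ - R)ᴴ * (ρ - R)) := by
  have hstar : star (1 / 2 : ℂ) = 1 / 2 := by simp
  rw [conjTranspose_smul, conjTranspose_add, conjTranspose_sub, hρ, hR, hstar,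
    smul_mul_smul_comm, add_mul, mul_add, mul_add, sub_mul, mul_sub, mul_sub]
  module

variable [DecidableEq n]

lemma psqrt_eq_sqrt {M : Matrix n n ℂ} (hM : M.PosSemidef) : psqrt M = CFC.sqrt M := by
  rw [psqrt, dif_pos hM, CFC.sqrt_eq_real_sqrt M hM.nonneg, cfcₙ_eq_cfc, hM.1.cfc_eq]
  rfl

lemma conjTranspose_sqrt (A : Matrix n n ℂ) : (CFC.sqrt A)ᴴ = CFC.sqrt A :=
  (IsSelfAdjoint.of_nonneg (CFC.sqrt_nonneg A)).star_eq

lemma PosSemidef.sqrt_mul_mul_sqrt (ρ : Matrix n n ℂ) {σ : Matrix n n ℂ} (hσ : σ.PosSemidef) :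
    (CFC.sqrt ρ * σ * CFC.sqrt ρ).PosSemidef := by
  simpa [conjTranspose_sqrt] using hσ.conjTranspose_mul_mul_same (CFC.sqrt ρ)

lemma sqrt_mono {P M : Matrix n n ℂ} (h : P ≤ M) : CFC.sqrt P ≤ CFC.sqrt M := by
  -- matrices are a C⋆-algebra only for the L2 operator norm
  open scoped Matrix.Norms.L2Operator in exact CFC.sqrt_le_sqrt P M h

lemma IsHermitian.re_trace_cfc {A : Matrix n n ℂ} (hA : A.IsHermitian) (f : ℝ → ℝ) :
    (cfc f A).trace.re = ∑ i, f (hA.eigenvalues i) := by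
  rw [hA.cfc_eq, IsHermitian.cfc, Unitary.conjStarAlgAut_apply, trace_mul_cycle,
    Unitary.coe_star_mul_self, one_mul, trace_diagonal]
  simp

lemma two_mul_re_trace_le_re_trace_cfc (B : Matrix n n ℂ) {g : ℝ → ℝ}
    (hg : ∀ x ∈ spectrum ℝ (B * Bᴴ), g x ≠ 0) :
    2 * B.trace.re ≤ (cfc (fun x => g x ^ 2 + x / g x ^ 2) (B * Bᴴ)).trace.re := by
  set P := B * Bᴴ
  have hP : IsSelfAdjoint P := (isHermitian_mul_conjTranspose_self B).isSelfAdjoint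
  have hc (f : ℝ → ℝ) : ContinuousOn f (spectrum ℝ P) := finite_real_spectrum.continuousOn f
  set S := cfc g P
  set T := cfc (fun x => (g x)⁻¹) P
  have hTS : T * S = 1 := by
    rw [← cfc_mul _ _ P (hc _) (hc _), ← cfc_one ℝ P hP]
    exact cfc_congr fun x hx => inv_mul_cancel₀ (hg x hx)
  have hST : S * T = 1 := mul_eq_one_comm.mp hTS
  have hS : Sᴴ = S := (cfc_predicate g P : IsSelfAdjoint S).star_eq
  have hT : Tᴴ = T := (cfc_predicate _ P : IsSelfAdjoint T).star_eq
  have hcfc : cfc (fun x => g x ^ 2 + x / g x ^ 2) P = S * S + T * T * P := by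
    calc cfc (fun x => g x ^ 2 + x / g x ^ 2) P
        = cfc (fun x => g x * g x + (g x)⁻¹ * (g x)⁻¹ * x) P := cfc_congr fun x _ => by ring
      _ = S * S + T * T * cfc (fun x => x) P := by
        rw [cfc_add P _ _ (hc _) (hc _), cfc_mul _ _ P (hc _) (hc _),
          cfc_mul _ _ P (hc _) (hc _), cfc_mul _ _ P (hc _) (hc _)]
      _ = S * S + T * T * P := by rw [cfc_id' ℝ P hP]
  have hexpand : (S - T * B)ᴴ * (S - T * B) = S * S - B - Bᴴ + Bᴴ * (T * T) * B := by
    rw [conjTranspose_sub, conjTranspose_mul, hS, hT, sub_mul, mul_sub, mul_sub,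
      ← mul_assoc S T B, hST, one_mul, mul_assoc Bᴴ T S, hTS, mul_one]
    noncomm_ring
  have hcycle : (Bᴴ * (T * T) * B).trace = (T * T * P).trace := by
    rw [trace_mul_comm _ B, ← mul_assoc, trace_mul_comm]
  have h0 := (posSemidef_conjTranspose_mul_self (S - T * B)).re_trace_nonneg
  rw [hexpand] at h0
  rw [hcfc]
  simp only [trace_add, trace_sub, trace_conjTranspose, hcycle, Complex.add_re, Complex.sub_re,
    Complex.star_def, Complex.conj_re] at h0 ⊢
  linarith

lemma re_trace_le_re_trace_sqrt_mul_conjTranspose (B : Matrix n n ℂ) :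
    B.trace.re ≤ (CFC.sqrt (B * Bᴴ)).trace.re := by
  have hP := isHermitian_mul_conjTranspose_self B
  have hP0 : 0 ≤ B * Bᴴ := (posSemidef_self_mul_conjTranspose B).nonneg
  have hbound (ε : ℝ) (hε : 0 < ε) : B.trace.re ≤ ∑ i, √(hP.eigenvalues i + ε) := by
    have hg : ∀ x ∈ spectrum ℝ (B * Bᴴ), √√(x + ε) ≠ 0 := fun x hx => by
      have := spectrum_nonneg_of_nonneg hP0 hx
      positivity
    have hterm (i : n) : √√(hP.eigenvalues i + ε) ^ 2 +
        hP.eigenvalues i / √√(hP.eigenvalues i + ε) ^ 2 ≤ 2 * √(hP.eigenvalues i + ε) := by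
      have hev := eigenvalues_self_mul_conjTranspose_nonneg B i
      have hpos : 0 < √(hP.eigenvalues i + ε) := by positivity
      have : hP.eigenvalues i / √(hP.eigenvalues i + ε) ≤ √(hP.eigenvalues i + ε) := by
        rw [div_le_iff₀ hpos, ← sq, Real.sq_sqrt (by positivity)]
        linarith
      rw [Real.sq_sqrt hpos.le]
      linarith
    have h := two_mul_re_trace_le_re_trace_cfc B hg
    rw [hP.re_trace_cfc] at h
    have := h.trans (Finset.sum_le_sum fun i _ => hterm i)
    rw [← Finset.mul_sum] at this
    linarith
  have hlim : Filter.Tendsto (fun ε => ∑ i, √(hP.eigenvalues i + ε))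
      (nhdsWithin 0 (Set.Ioi 0)) (nhds (∑ i, √(hP.eigenvalues i))) := by
    have hcont : Continuous (fun ε => ∑ i, √(hP.eigenvalues i + ε)) := by fun_prop
    simpa using (hcont.tendsto 0).mono_left nhdsWithin_le_nhds
  rw [CFC.sqrt_eq_real_sqrt _ hP0, cfcₙ_eq_cfc, hP.re_trace_cfc]
  exact ge_of_tendsto hlim (eventually_nhdsWithin_of_forall hbound)

lemma re_trace_le_re_trace_sqrt_of_mul_conjTranspose_le {B M : Matrix n n ℂ} (h : B * Bᴴ ≤ M) :
    B.trace.re ≤ (CFC.sqrt M).trace.re :=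
  (re_trace_le_re_trace_sqrt_mul_conjTranspose B).trans (re_trace_mono (sqrt_mono h))

lemma mul_conjTranspose_eq_of_re_trace_sqrt_le {B M : Matrix n n ℂ} (h : B * Bᴴ ≤ M)
    (heq : (CFC.sqrt M).trace.re ≤ B.trace.re) : B * Bᴴ = M := by
  have hP : 0 ≤ B * Bᴴ := (posSemidef_self_mul_conjTranspose B).nonneg
  have hsqrt : CFC.sqrt (B * Bᴴ) = CFC.sqrt M := eq_of_le_of_re_trace_le (sqrt_mono h)
    (heq.trans (re_trace_le_re_trace_sqrt_mul_conjTranspose B))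
  rw [← CFC.sqrt_mul_sqrt_self (B * Bᴴ) hP, hsqrt, CFC.sqrt_mul_sqrt_self M (hP.trans h)]

end Matrix

section Fidelity

open Matrix

variable {n : Type*} [Fintype n] [DecidableEq n] {ρ σ : Matrix n n ℂ}

lemma fidelity_eq (hρ : ρ.PosSemidef) (hσ : σ.PosSemidef) :
    fidelity ρ σ = (CFC.sqrt (CFC.sqrt ρ * σ * CFC.sqrt ρ)).trace.re := by
  rw [fidelity, psqrt_eq_sqrt hρ, psqrt_eq_sqrt (hσ.sqrt_mul_mul_sqrt ρ)]

lemma affinity_eq (hρ : ρ.PosSemidef) (hσ : σ.PosSemidef) :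
    affinity ρ σ = (CFC.sqrt ρ * CFC.sqrt σ).trace.re := by
  rw [affinity, psqrt_eq_sqrt hρ, psqrt_eq_sqrt hσ]

lemma sqrt_mul_mul_sqrt_self (hρ : ρ.PosSemidef) : CFC.sqrt ρ * ρ * CFC.sqrt ρ = ρ * ρ := by
  have hX := CFC.sqrt_mul_sqrt_self ρ hρ.nonneg
  rw [← hX, ← mul_assoc, hX, mul_assoc, hX]

lemma fidelity_self (hρ : ρ.PosSemidef) : fidelity ρ ρ = ρ.trace.re := by
  rw [fidelity_eq hρ hρ, sqrt_mul_mul_sqrt_self hρ, CFC.sqrt_mul_self ρ hρ.nonneg]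

lemma affinity_self (hρ : ρ.PosSemidef) : affinity ρ ρ = ρ.trace.re := by
  rw [affinity_eq hρ hρ, CFC.sqrt_mul_sqrt_self ρ hρ.nonneg]

lemma affinity_le_fidelity (hρ : ρ.PosSemidef) (hσ : σ.PosSemidef) :
    affinity ρ σ ≤ fidelity ρ σ := by
  have hB : CFC.sqrt ρ * CFC.sqrt σ * (CFC.sqrt ρ * CFC.sqrt σ)ᴴ =
      CFC.sqrt ρ * σ * CFC.sqrt ρ := by
    rw [conjTranspose_mul, conjTranspose_sqrt, conjTranspose_sqrt, mul_assoc,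
      ← mul_assoc (CFC.sqrt σ), CFC.sqrt_mul_sqrt_self σ hσ.nonneg, mul_assoc]
  rw [affinity_eq hρ hσ, fidelity_eq hρ hσ]
  exact re_trace_le_re_trace_sqrt_of_mul_conjTranspose_le hB.le

lemma eq_of_re_trace_add_re_trace_eq_two_mul_affinity (hρ : ρ.PosSemidef) (hσ : σ.PosSemidef)
    (h : ρ.trace.re + σ.trace.re = 2 * affinity ρ σ) : ρ = σ := by
  set X := CFC.sqrt ρ
  set Y := CFC.sqrt σ
  have hXX : X * X = ρ := CFC.sqrt_mul_sqrt_self ρ hρ.nonneg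
  have hYY : Y * Y = σ := CFC.sqrt_mul_sqrt_self σ hσ.nonneg
  have hexpand : (X - Y)ᴴ * (X - Y) = ρ + σ - (X * Y + Y * X) := by
    rw [conjTranspose_sub, conjTranspose_sqrt, conjTranspose_sqrt, sub_mul, mul_sub, mul_sub, hXX,
      hYY]
    abel
  have hzero : (X - Y)ᴴ * (X - Y) = 0 := by
    refine (posSemidef_conjTranspose_mul_self (X - Y)).eq_zero_of_re_trace_nonpos ?_
    rw [hexpand, trace_sub, trace_add, trace_add, trace_mul_comm Y X]
    rw [affinity_eq hρ hσ] at h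
    simp only [Complex.sub_re, Complex.add_re]
    linarith
  rw [← hXX, ← hYY, sub_eq_zero.mp (conjTranspose_mul_self_eq_zero.mp hzero)]

lemma sqrt_mul_midpoint_mul_sqrt (hρ : ρ.PosSemidef) (hσ : σ.PosSemidef) :
    CFC.sqrt ρ * ((1 / 2 : ℂ) • (ρ + σ)) * CFC.sqrt ρ =
      (1 / 2 : ℂ) • (ρ * ρ + CFC.sqrt (CFC.sqrt ρ * σ * CFC.sqrt ρ) *
        CFC.sqrt (CFC.sqrt ρ * σ * CFC.sqrt ρ)) := by
  rw [CFC.sqrt_mul_sqrt_self _ (hσ.sqrt_mul_mul_sqrt ρ).nonneg, mul_smul_comm, smul_mul_assoc,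
    mul_add, add_mul, sqrt_mul_mul_sqrt_self hρ]

lemma re_trace_add_fidelity_le_two_mul_fidelity_midpoint (hρ : ρ.PosSemidef)
    (hσ : σ.PosSemidef) :
    ρ.trace.re + fidelity ρ σ ≤ 2 * fidelity ρ ((1 / 2 : ℂ) • (ρ + σ)) ∧
      (ρ.trace.re + fidelity ρ σ = 2 * fidelity ρ ((1 / 2 : ℂ) • (ρ + σ)) →
        fidelity ρ σ = ρ.trace.re) := by
  set R := CFC.sqrt (CFC.sqrt ρ * σ * CFC.sqrt ρ) with hR
  set B := (1 / 2 : ℂ) • (ρ + R)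
  have hM : CFC.sqrt ρ * ((1 / 2 : ℂ) • (ρ + σ)) * CFC.sqrt ρ
      = B * Bᴴ + (1 / 4 : ℂ) • ((ρ - R)ᴴ * (ρ - R)) := by
    rw [sqrt_mul_midpoint_mul_sqrt hρ hσ, half_smul_add_mul_self_eq hρ.1 (conjTranspose_sqrt _)]
  have hle : B * Bᴴ ≤ CFC.sqrt ρ * ((1 / 2 : ℂ) • (ρ + σ)) * CFC.sqrt ρ := by
    rw [le_iff, hM, add_sub_cancel_left]
    exact (posSemidef_conjTranspose_mul_self _).smul (by rw [Complex.nonneg_iff]; norm_num)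
  have htrB : 2 * B.trace.re = ρ.trace.re + fidelity ρ σ := by
    rw [fidelity_eq hρ hσ, ← hR, trace_smul, trace_add]
    simp
  rw [fidelity_eq hρ ((hρ.add hσ).smul (by rw [Complex.nonneg_iff]; norm_num))]
  refine ⟨by linarith [re_trace_le_re_trace_sqrt_of_mul_conjTranspose_le hle], fun heq => ?_⟩
  have hBM := mul_conjTranspose_eq_of_re_trace_sqrt_le hle (by linarith)
  rw [hM, left_eq_add, smul_eq_zero, conjTranspose_mul_self_eq_zero, sub_eq_zero] at hBM
  rw [fidelity_eq hρ hσ, ← hR, ← hBM.resolve_left (by norm_num)]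

end Fidelity

lemma mconj_eq_transpose {n : Type*} {A : Matrix n n ℂ} (hA : A.IsHermitian) : mconj A = Aᵀ := by
  ext i j
  rw [mconj, Matrix.map_apply, Matrix.transpose_apply, ← hA.apply]
  simp

lemma Matrix.PosSemidef.mconj {n : Type*} [Fintype n] {A : Matrix n n ℂ} (hA : A.PosSemidef) :
    (mconj A).PosSemidef :=
  mconj_eq_transpose hA.1 ▸ hA.transpose

lemma re_trace_mconj {n : Type*} [Fintype n] (A : Matrix n n ℂ) :
    (mconj A).trace.re = A.trace.re := by
  simp [mconj, Matrix.trace]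

theorem stmt10 (d : ℕ) (ρ : Matrix (Fin d) (Fin d) ℂ) (hρ : IsDensityMatrix ρ) :
    MRe ρ ≤ (1/2) * MT ρ ∧ (MRe ρ = (1/2) * MT ρ ↔ ρ = mconj ρ) := by
  obtain ⟨hpsd, htr⟩ := hρ
  have htr1 : ρ.trace.re = 1 := by rw [htr, Complex.one_re]
  have hconj : (mconj ρ).PosSemidef := hpsd.mconj
  have hAF := affinity_le_fidelity hpsd hconj
  obtain ⟨hmid, hmid_eq⟩ := re_trace_add_fidelity_le_two_mul_fidelity_midpoint hpsd hconj
  rw [MRe, MT, reState]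
  refine ⟨by linarith, fun heq => ?_, fun hreal => ?_⟩
  · have hF : fidelity ρ (mconj ρ) = ρ.trace.re := hmid_eq (by linarith)
    exact eq_of_re_trace_add_re_trace_eq_two_mul_affinity hpsd hconj
      (by rw [re_trace_mconj]; linarith)
  · have hmidpoint : (1 / 2 : ℂ) • (ρ + ρ) = ρ := by
      rw [← two_smul ℂ ρ, smul_smul]
      norm_num
    rw [← hreal, hmidpoint, fidelity_self hpsd, affinity_self hpsd, htr1]
    norm_num
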